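/- (Theorem 2.5 (ii)) Assume: (a) for every x₀ ∈ Inv there exists a differentiable curve y : ℝ → E solving the unperturbed system with y(0) = x₀ and y(t) ∈ Inv for all t ∈ ℝ; (b) solutions of the geometrically dissipated system are unique, i.e. any two differentiable curves ℝ → E solving the geometrically dissipated system that agree at some time agree everywhere. Then Inv is invariant under the geometrically dissipated system: if x : ℝ → E solves the geometrically dissipated system and x(0) ∈ Inv, then x(t) ∈ Inv for all t ∈ ℝ. -/
import Mathlib


open scoped RealInnerProductSpace BigOperators
open Filter Topology

/-- `Σ^{(a₁,…,a_r)}_{(b₁,…,b_s)}`: the `r × s` real matrix whose `(i,j)` entry is `⟪b j, a i⟫`. -/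
noncomputable def sigmaMat {E : Type*} [NormedAddCommGroup E] [InnerProductSpace ℝ E]
    {r s : ℕ} (a : Fin r → E) (b : Fin s → E) : Matrix (Fin r) (Fin s) ℝ :=
  Matrix.of fun i j => ⟪b j, a i⟫

/-- The standard control vector `v₀(w₁,…,w_{k+1},u)`: there are `k+1` vectors `w`
(`k+1 ≥ 1` encodes the requirement that the number of `w`-vectors is at least one).
With `0`-indexing, the sign `(-1)^(i+k+1)` below is the paper's `(-1)^{i+k+1}` for
`1`-indexed `i` and `k+1` vectors. -/
noncomputable def stdControl {E : Type*} [NormedAddCommGroup E] [InnerProductSpace ℝ E]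
    {k : ℕ} (w : Fin (k + 1) → E) (u : E) : E :=
  (∑ i : Fin (k + 1),
      ((-1 : ℝ) ^ ((i : ℕ) + k + 1) *
        (sigmaMat w (Fin.snoc (w ∘ i.succAbove) u)).det) • w i) +
    (sigmaMat w w).det • u

/-- The family of gradients `(∇F₁(x),…,∇F_{k+1}(x),∇G(x))`. -/
noncomputable def gradFam {E : Type*} [NormedAddCommGroup E] [InnerProductSpace ℝ E]
    [FiniteDimensional ℝ E] {k : ℕ} (F : Fin (k + 1) → E → ℝ) (G : E → ℝ) (x : E) :
    Fin (k + 1 + 1) → E :=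
  Fin.snoc (fun i => gradient (F i) x) (gradient G x)

/-- The standard control vector field `x ↦ v₀(∇F₁(x),…,∇F_{k+1}(x),∇G(x))`. -/
noncomputable def v0Field {E : Type*} [NormedAddCommGroup E] [InnerProductSpace ℝ E]
    [FiniteDimensional ℝ E] {k : ℕ} (F : Fin (k + 1) → E → ℝ) (G : E → ℝ) (x : E) : E :=
  stdControl (fun i => gradient (F i) x) (gradient G x)

/-- `det Σ^{(∇F₁(x),…,∇F_{k+1}(x),∇G(x))}_{(∇F₁(x),…,∇F_{k+1}(x),∇G(x))}`. -/
noncomputable def gramDetFG {E : Type*} [NormedAddCommGroup E] [InnerProductSpace ℝ E]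
    [FiniteDimensional ℝ E] {k : ℕ} (F : Fin (k + 1) → E → ℝ) (G : E → ℝ) (x : E) : ℝ :=
  (sigmaMat (gradFam F G x) (gradFam F G x)).det

/-- The set `Inv = {x | det Σ^{(∇F(x),∇G(x))}_{(∇F(x),∇G(x))} = 0}`. -/
def invSet {E : Type*} [NormedAddCommGroup E] [InnerProductSpace ℝ E]
    [FiniteDimensional ℝ E] {k : ℕ} (F : Fin (k + 1) → E → ℝ) (G : E → ℝ) : Set E :=
  {x | gramDetFG F G x = 0}

lemma snoc_comp_succAbove {E : Type*} {k : ℕ} (w : Fin (k + 1) → E) (u : E) (i : Fin (k + 1)) :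
    Fin.snoc (w ∘ i.succAbove) u = (Fin.snoc w u : Fin (k+2) → E) ∘ (i.castSucc).succAbove := by
  funext q
  refine Fin.lastCases ?_ ?_ q
  · have h : (i.castSucc).succAbove (Fin.last k) = Fin.last (k + 1) := by
      rw [Fin.succAbove_of_le_castSucc _ _ (by simpa using Fin.le_last i), Fin.succ_last]
    simp [h]
  · intro q'
    simp [Fin.castSucc_succAbove_castSucc]

theorem stdControl_eq_sum {E : Type*} [NormedAddCommGroup E] [InnerProductSpace ℝ E]
    {k : ℕ} (w : Fin (k + 1) → E) (u : E) :
    stdControl w u = ∑ j : Fin (k + 2),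
      ((-1 : ℝ) ^ ((k + 1) + (j : ℕ)) *
        ((sigmaMat (Fin.snoc w u) (Fin.snoc w u)).submatrix
          (Fin.last (k + 1)).succAbove j.succAbove).det) • (Fin.snoc w u) j := by
  rw [stdControl]
  conv_rhs => rw [Fin.sum_univ_castSucc]
  congr 1
  · apply Finset.sum_congr rfl
    intro i _
    have hsub : sigmaMat w (Fin.snoc (w ∘ i.succAbove) u) =
        (sigmaMat (Fin.snoc w u) (Fin.snoc w u)).submatrix
          (Fin.last (k + 1)).succAbove (i.castSucc).succAbove := by
      ext p q
      simp [sigmaMat, Fin.succAbove_last, snoc_comp_succAbove w u i]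
    rw [hsub, Fin.snoc_castSucc]
    congr 2
    rw [Fin.coe_castSucc]
    rw [show (i:ℕ) + k + 1 = (k + 1 + (i:ℕ)) by ring]
  · have hsub : sigmaMat w w =
        (sigmaMat (Fin.snoc w u) (Fin.snoc w u)).submatrix
          (Fin.last (k + 1)).succAbove (Fin.last (k + 1)).succAbove := by
      ext p q
      simp [sigmaMat, Fin.succAbove_last]
    rw [hsub, Fin.snoc_last, Fin.val_last]
    rw [show ((-1:ℝ)) ^ (k + 1 + (k + 1)) = 1 by rw [show k+1+(k+1) = 2*(k+1) by ring, pow_mul]; norm_num]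
    rw [one_mul]

theorem inner_stdControl {E : Type*} [NormedAddCommGroup E] [InnerProductSpace ℝ E]
    {k : ℕ} (w : Fin (k + 1) → E) (u : E) (p : Fin (k + 2)) :
    ⟪(Fin.snoc w u : Fin (k+2) → E) p, stdControl w u⟫ =
      ((sigmaMat (Fin.snoc w u) (Fin.snoc w u)).updateRow (Fin.last (k + 1))
        (sigmaMat (Fin.snoc w u) (Fin.snoc w u) p)).det := by
  set v : Fin (k + 2) → E := Fin.snoc w u with hv
  set A := sigmaMat v v with hA
  set B := A.updateRow (Fin.last (k + 1)) (A p) with hB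
  rw [stdControl_eq_sum, inner_sum]
  rw [Matrix.det_succ_row B (Fin.last (k + 1))]
  apply Finset.sum_congr rfl
  intro j _
  rw [real_inner_smul_right]
  have h1 : B (Fin.last (k+1)) j = ⟪v p, v j⟫ := by
    rw [hB, Matrix.updateRow_self, hA]
    simp [sigmaMat, real_inner_comm]
  have h2 : B.submatrix (Fin.last (k + 1)).succAbove j.succAbove =
      A.submatrix (Fin.last (k + 1)).succAbove j.succAbove := by
    ext a b
    rw [Matrix.submatrix_apply, Matrix.submatrix_apply, Fin.succAbove_last, hB,
      Matrix.updateRow_ne (Fin.castSucc_lt_last a).ne]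
  rw [h1, h2, Fin.val_last]
  ring

theorem stdControl_eq_zero {E : Type*} [NormedAddCommGroup E] [InnerProductSpace ℝ E]
    {k : ℕ} (w : Fin (k + 1) → E) (u : E)
    (h : (sigmaMat (Fin.snoc w u) (Fin.snoc w u)).det = 0) :
    stdControl w u = 0 := by
  set v : Fin (k + 2) → E := Fin.snoc w u with hv
  set A := sigmaMat v v with hA
  have key : ∀ p : Fin (k + 2), ⟪v p, stdControl w u⟫ = 0 := by
    intro p
    rw [inner_stdControl w u p]
    by_cases hp : p = Fin.last (k + 1)
    · rw [hp, Matrix.updateRow_eq_self]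
      exact h
    · exact Matrix.det_zero_of_row_eq (Ne.symm hp)
        (by rw [Matrix.updateRow_self, Matrix.updateRow_ne hp])
  have : ⟪stdControl w u, stdControl w u⟫ = 0 := by
    nth_rewrite 1 [stdControl_eq_sum]
    rw [sum_inner]
    apply Finset.sum_eq_zero
    intro j _
    rw [real_inner_smul_left, key j, mul_zero]
  exact inner_self_eq_zero.mp this

theorem v0Field_eq_zero {E : Type*} [NormedAddCommGroup E] [InnerProductSpace ℝ E]
    [FiniteDimensional ℝ E] {k : ℕ} (F : Fin (k + 1) → E → ℝ) (G : E → ℝ) {x : E}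
    (h : x ∈ invSet F G) : v0Field F G x = 0 := by
  apply stdControl_eq_zero
  exact h

/-- Theorem 2.5 (ii): assuming (a) every point of `Inv` lies on a solution of
the unperturbed system defined on `ℝ` and staying in `Inv`, and (b) uniqueness of solutions
of the geometrically dissipated system, the set `Inv` is invariant under the geometrically
dissipated system. -/
theorem invSet_invariant_perturbed
    {E : Type*} [NormedAddCommGroup E] [InnerProductSpace ℝ E]
    [FiniteDimensional ℝ E] {k : ℕ} (F : Fin (k + 1) → E → ℝ) (G : E → ℝ) (X : E → E)
    (hF : ∀ i, ContDiff ℝ 1 (F i)) (hG : ContDiff ℝ 1 G)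
    (ha : ∀ x₀ ∈ invSet F G, ∃ y : ℝ → E,
      (∀ t : ℝ, HasDerivAt y (X (y t)) t) ∧ y 0 = x₀ ∧ ∀ t : ℝ, y t ∈ invSet F G)
    (hb : ∀ x y : ℝ → E,
      (∀ t : ℝ, HasDerivAt x (X (x t) - v0Field F G (x t)) t) →
      (∀ t : ℝ, HasDerivAt y (X (y t) - v0Field F G (y t)) t) →
      (∃ t₀ : ℝ, x t₀ = y t₀) → ∀ t : ℝ, x t = y t) :
    ∀ x : ℝ → E, (∀ t : ℝ, HasDerivAt x (X (x t) - v0Field F G (x t)) t) →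
      x 0 ∈ invSet F G → ∀ t : ℝ, x t ∈ invSet F G := by
  intro x hx hx0 t
  obtain ⟨y, hy, hy0, hyInv⟩ := ha (x 0) hx0
  have hy' : ∀ s : ℝ, HasDerivAt y (X (y s) - v0Field F G (y s)) s := by
    intro s
    rw [v0Field_eq_zero F G (hyInv s), sub_zero]
    exact hy s
  have hxy := hb x y hx hy' ⟨0, by rw [hy0]⟩ t
  rw [hxy]
  exact hyInv t
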